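/- Suppose the regularizer R : [0,1] → ℝ satisfies the standard assumption with Lipschitz constant L > 0 and the main assumption with constants c1, δ', c2, c3, let 0 < δ < min{1/15, c1/6, c1²/300, δ'} and 0 < η ≤ 1/(4L), and consider the OFTRL dynamics with regularizer R and step size η on the game A_δ. Then there exists t ≥ 2 with x^t[1] ≥ 1/(1+δ); moreover, letting T₁ be the smallest such index, T₁ ≥ 1/(2ηL) and y^{T₁}[1] ≤ 1/2 − c1. -/
import Mathlib

open Set Matrix Filter

noncomputable section

/-- The 2×2 loss matrix `A_δ` with first row `(1/2+δ, 1/2)` and second row `(0, 1)`. -/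
def Adelta (δ : ℝ) : Matrix (Fin 2) (Fin 2) ℝ := !![1/2 + δ, 1/2; 0, 1]

/-- `e_x^t = ℓ_x^t[1] − ℓ_x^t[2]` where `ℓ_x^t = A y^t` (and `e_x^0 = 0`). -/
def exSeq (A : Matrix (Fin 2) (Fin 2) ℝ) (y : ℕ → Fin 2 → ℝ) (t : ℕ) : ℝ :=
  if t = 0 then 0 else A.mulVec (y t) 0 - A.mulVec (y t) 1

/-- `e_y^t = ℓ_y^t[1] − ℓ_y^t[2]` where `ℓ_y^t = −Aᵀ x^t` (and `e_y^0 = 0`). -/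
def eySeq (A : Matrix (Fin 2) (Fin 2) ℝ) (x : ℕ → Fin 2 → ℝ) (t : ℕ) : ℝ :=
  if t = 0 then 0 else (-(Aᵀ.mulVec (x t))) 0 - (-(Aᵀ.mulVec (x t))) 1

/-- `E^t = Σ_{k=1}^{t} e^k` (since `e 0 = 0`, summing over `range (t+1)` is the same). -/
def cumSum (e : ℕ → ℝ) (t : ℕ) : ℝ := ∑ k ∈ Finset.range (t + 1), e k

/-- The OFTRL dynamics on a 2×2 zero-sum game `A` with response function `F = F_{η,R}`. -/
def IsOFTRL2 (F : ℝ → ℝ) (A : Matrix (Fin 2) (Fin 2) ℝ)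
    (x y : ℕ → Fin 2 → ℝ) : Prop :=
  ∀ t : ℕ, 1 ≤ t →
    x t 0 = F (cumSum (exSeq A y) (t - 1) + exSeq A y (t - 1)) ∧
    x t 1 = 1 - x t 0 ∧
    y t 0 = F (cumSum (eySeq A x) (t - 1) + eySeq A x (t - 1)) ∧
    y t 1 = 1 - y t 0

lemma cumSum_succ (e : ℕ → ℝ) (n : ℕ) : cumSum e (n+1) = cumSum e n + e (n+1) := by
  simp [cumSum, Finset.sum_range_succ]

lemma cumSum_le_add (e : ℕ → ℝ) (d : ℝ) {m n : ℕ} (h : m ≤ n)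
    (hb : ∀ k, m < k → k ≤ n → e k ≤ d) :
    cumSum e n ≤ cumSum e m + ((n:ℝ) - (m:ℝ)) * d := by
  induction n, h using Nat.le_induction with
  | base => simp
  | succ n hmn ih =>
    rw [cumSum_succ]
    have h1 := ih (fun k hk hk' => hb k hk (by omega))
    have h2 := hb (n+1) (by omega) le_rfl
    push_cast
    nlinarith

lemma add_le_cumSum (e : ℕ → ℝ) (d : ℝ) {m n : ℕ} (h : m ≤ n)
    (hb : ∀ k, m < k → k ≤ n → d ≤ e k) :
    cumSum e m + ((n:ℝ) - (m:ℝ)) * d ≤ cumSum e n := by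
  induction n, h using Nat.le_induction with
  | base => simp
  | succ n hmn ih =>
    rw [cumSum_succ]
    have h1 := ih (fun k hk hk' => hb k hk (by omega))
    have h2 := hb (n+1) (by omega) le_rfl
    push_cast
    nlinarith

set_option maxHeartbeats 3000000 in
/-- Stage I: there exists `t ≥ 2` with `x^t[1] ≥ 1/(1+δ)`, and the smallest
such index `T₁` satisfies `T₁ ≥ 1/(2ηL)` and `y^{T₁}[1] ≤ 1/2 − c1`. -/
theorem oftrl_stage_one
    (R : ℝ → ℝ) (η L c1 c2 c3 δ' δ : ℝ) (F1 Fη : ℝ → ℝ)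
    (hL : 0 < L) (hη : 0 < η) (hη' : η ≤ 1 / (4 * L))
    (hF1 : ∀ e : ℝ, F1 e ∈ Set.Icc (0 : ℝ) 1 ∧ ∀ z ∈ Set.Icc (0 : ℝ) 1, z ≠ F1 e →
      F1 e * e + R (F1 e) < z * e + R z)
    (hFη : ∀ e : ℝ, Fη e ∈ Set.Icc (0 : ℝ) 1 ∧ ∀ z ∈ Set.Icc (0 : ℝ) 1, z ≠ Fη e →
      Fη e * e + (1 / η) * R (Fη e) < z * e + (1 / η) * R z)
    (hstd1 : F1 0 = 1 / 2)
    (hstd2 : Tendsto F1 atBot (nhds 1))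
    (hstd3 : Tendsto F1 atTop (nhds 0))
    (hstd4 : ∀ a b : ℝ, |F1 a - F1 b| ≤ L * |a - b|)
    (hc1 : c1 = 1 / 2 - F1 (1 / (20 * L)))
    (hδ'pos : 0 < δ') (hc2pos : 0 < c2) (hc3 : c3 ∈ Set.Ioc (0 : ℝ) (1 / 2))
    (hmain1 : ∀ d : ℝ, 0 < d → d ≤ δ' → ∀ E : ℝ, 1 / (1 + d) ≤ F1 E →
      (1 + c3) / (1 + c3 + d) ≤ F1 (E - c1 ^ 2 / (30 * L * d)))
    (hmain2 : ∀ d : ℝ, 0 < d → d ≤ δ' → ∀ E : ℝ, 1 / (2 * (1 + d)) ≤ F1 E →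
      1 / 2 + c2 ≤ F1 (E - c3 * c1 ^ 2 / (120 * L) + d / (4 * L)))
    (hδ : 0 < δ) (hδ1 : δ < 1 / 15) (hδ2 : δ < c1 / 6) (hδ3 : δ < c1 ^ 2 / 300)
    (hδ4 : δ < δ')
    (x y : ℕ → Fin 2 → ℝ) (hdyn : IsOFTRL2 Fη (Adelta δ) x y) :
    ∃ T1 : ℕ, 2 ≤ T1 ∧ 1 / (1 + δ) ≤ x T1 0 ∧
      (∀ t : ℕ, 2 ≤ t → 1 / (1 + δ) ≤ x t 0 → T1 ≤ t) ∧
      1 / (2 * η * L) ≤ (T1 : ℝ) ∧ y T1 0 ≤ 1 / 2 - c1 := by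
  classical
  set lam : ℝ := η * L with hlam
  have hlampos : 0 < lam := mul_pos hη hL
  have hlam4 : lam ≤ 1/4 := by
    rw [le_div_iff₀ (by positivity)] at hη'
    simpa [hlam] using by nlinarith
  have hc1pos : 0 < c1 := by linarith
  have hc1le : c1 ≤ 1/20 := by
    have h := hstd4 (1 / (20 * L)) 0
    rw [hstd1, sub_zero, abs_of_pos (by positivity : (0:ℝ) < 1/(20*L))] at h
    have h20 : L * (1 / (20 * L)) = 1/20 := by field_simp
    rw [h20] at h
    have h2 := abs_le.mp h
    linarith [h2.1, h2.2]
  -- monotonicity of F1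
  have hmono : ∀ a b : ℝ, a ≤ b → F1 b ≤ F1 a := by
    intro a b hab
    by_contra hlt
    push_neg at hlt
    have hne : F1 b ≠ F1 a := ne_of_gt hlt
    have h1 := (hF1 a).2 (F1 b) (hF1 b).1 hne
    have h2 := (hF1 b).2 (F1 a) (hF1 a).1 (Ne.symm hne)
    nlinarith [mul_nonneg (sub_nonneg.mpr hab) (sub_nonneg.mpr (le_of_lt hlt))]
  -- Fη in terms of F1
  have hFeq : ∀ e : ℝ, Fη e = F1 (η * e) := by
    intro e
    by_contra hne
    have h1 := (hFη e).2 (F1 (η*e)) (hF1 (η*e)).1 (Ne.symm hne)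
    have h2 := (hF1 (η*e)).2 (Fη e) (hFη e).1 hne
    have h1' := mul_lt_mul_of_pos_left h1 hη
    have e1 : η * (Fη e * e + 1/η * R (Fη e)) = η * Fη e * e + R (Fη e) := by
      field_simp
    have e2 : η * (F1 (η*e) * e + 1/η * R (F1 (η*e))) = η * F1 (η*e) * e + R (F1 (η*e)) := by
      field_simp
    rw [e1, e2] at h1'
    nlinarith [h1', h2]
  have hF1range : ∀ e : ℝ, 0 ≤ F1 e ∧ F1 e ≤ 1 := fun e => ⟨(hF1 e).1.1, (hF1 e).1.2⟩
  -- notation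
  set EX : ℕ → ℝ := exSeq (Adelta δ) y with hEXdef
  set EY : ℕ → ℝ := eySeq (Adelta δ) x with hEYdef
  have hEX0 : EX 0 = 0 := by rw [hEXdef, exSeq]; simp
  have hEY0 : EY 0 = 0 := by rw [hEYdef, eySeq]; simp
  have hcum0 : ∀ e : ℕ → ℝ, cumSum e 0 = e 0 := by intro e; simp [cumSum]
  have hdx : ∀ n : ℕ, x (n+1) 0 = F1 (η * (cumSum EX n + EX n)) := by
    intro n
    have h := (hdyn (n+1) (by omega)).1
    rw [hFeq] at h
    simpa using h
  have hdy : ∀ n : ℕ, y (n+1) 0 = F1 (η * (cumSum EY n + EY n)) := by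
    intro n
    have h := (hdyn (n+1) (by omega)).2.2.1
    rw [hFeq] at h
    simpa using h
  have hEXval : ∀ t : ℕ, 1 ≤ t → EX t = (1+δ) * y t 0 - 1/2 := by
    intro t ht
    have hy := (hdyn t ht).2.2.2
    rw [hEXdef, exSeq, if_neg (by omega)]
    simp [Adelta, Matrix.mulVec, dotProduct, Fin.sum_univ_two, hy]
    ring
  have hEYval : ∀ t : ℕ, 1 ≤ t → EY t = 1 - (1+δ) * x t 0 := by
    intro t ht
    have hx := (hdyn t ht).2.1
    rw [hEYdef, eySeq, if_neg (by omega)]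
    simp [Adelta, Matrix.mulVec, dotProduct, Fin.sum_univ_two, Matrix.transpose, hx]
    ring
  have hy01 : ∀ t : ℕ, 1 ≤ t → 0 ≤ y t 0 ∧ y t 0 ≤ 1 := by
    intro t ht
    have h := (hdyn t ht).2.2.1
    rw [h]
    exact ⟨((hFη _).1).1, ((hFη _).1).2⟩
  have hx01 : ∀ t : ℕ, 1 ≤ t → 0 ≤ x t 0 ∧ x t 0 ≤ 1 := by
    intro t ht
    have h := (hdyn t ht).1
    rw [h]
    exact ⟨((hFη _).1).1, ((hFη _).1).2⟩
  have hp1 : x 1 0 = 1/2 := by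
    have h := hdx 0
    rw [hcum0, hEX0] at h
    simpa [hstd1] using h
  -- coarse bounds on the increments
  have hEXub : ∀ t : ℕ, EX t ≤ 1/2 + δ := by
    intro t
    match t with
    | 0 => rw [hEX0]; linarith
    | (n+1) =>
      rw [hEXval (n+1) (by omega)]
      have := (hy01 (n+1) (by omega)).2
      nlinarith
  have hEXlb : ∀ t : ℕ, -(1/2) ≤ EX t := by
    intro t
    match t with
    | 0 => rw [hEX0]; linarith
    | (n+1) =>
      rw [hEXval (n+1) (by omega)]
      have := (hy01 (n+1) (by omega)).1
      nlinarith
  have hEYub : ∀ t : ℕ, EY t ≤ 1 := by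
    intro t
    match t with
    | 0 => rw [hEY0]; linarith
    | (n+1) =>
      rw [hEYval (n+1) (by omega)]
      have := (hx01 (n+1) (by omega)).1
      nlinarith
  -- Lipschitz-from-zero bound: F1 decreasing, F1(0)=1/2
  have hF1z : ∀ a : ℝ, F1 a ≤ 1/2 + L * |a| := by
    intro a
    have h := hstd4 a 0
    rw [hstd1, sub_zero] at h
    have := abs_le.mp h
    linarith [this.2]
  have hF1z' : ∀ a : ℝ, 1/2 - L * |a| ≤ F1 a := by
    intro a
    have h := hstd4 a 0
    rw [hstd1, sub_zero] at h
    have := abs_le.mp h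
    linarith [this.1]
  -- unconditional lower bound on e_y
  have honeδ : (0:ℝ) < 1 + δ := by linarith
  have hEYunc : ∀ n : ℕ, (1-δ)/2 - (1+δ) * lam * ((n:ℝ)+1) / 2 ≤ EY (n+1) := by
    intro n
    have hcs := add_le_cumSum EX (-(1/2)) (Nat.zero_le n) (fun k _ _ => hEXlb k)
    rw [hcum0, hEX0] at hcs
    have hax : -(((n:ℝ)+1)/2) ≤ cumSum EX n + EX n := by
      have := hEXlb n
      push_cast at hcs
      linarith
    have hparg : η * (-(((n:ℝ)+1)/2)) ≤ η * (cumSum EX n + EX n) :=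
      mul_le_mul_of_nonneg_left hax hη.le
    have hp := hmono _ _ hparg
    have hb := hF1z (η * (-(((n:ℝ)+1)/2)))
    have habs : η * (-(((n:ℝ)+1)/2)) = -(η * (((n:ℝ)+1)/2)) := by ring
    rw [habs, abs_neg, abs_of_nonneg (by positivity)] at hb
    rw [← habs] at hb
    have hxval : x (n+1) 0 ≤ 1/2 + lam * (((n:ℝ)+1)/2) := by
      rw [hdx n]
      calc F1 (η * (cumSum EX n + EX n)) ≤ F1 (η * (-(((n:ℝ)+1)/2))) := hp
        _ ≤ 1/2 + L * (η * (((n:ℝ)+1)/2)) := hb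
        _ = 1/2 + lam * (((n:ℝ)+1)/2) := by rw [hlam]; ring
    have hmul := mul_le_mul_of_nonneg_left hxval honeδ.le
    have h3 : (1+δ) * (1/2 + lam * (((n:ℝ)+1)/2)) = (1+δ)/2 + (1+δ)*lam*((n:ℝ)+1)/2 := by
      ring
    rw [h3] at hmul
    rw [hEYval (n+1) (by omega)]
    linarith
  -- Step 1 : existence
  have hone : (1:ℝ)/(1+δ) < 1 := by
    rw [div_lt_one (by linarith)]; linarith
  obtain ⟨M, hM⟩ : ∃ M : ℝ, ∀ E ≤ M, 1/(1+δ) ≤ F1 E :=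
    eventually_atBot.mp (hstd2.eventually (eventually_ge_nhds hone))
  have hinv : (1/(1+δ)) * (1+δ) = 1 := by field_simp
  have hex : ∃ t : ℕ, 2 ≤ t ∧ 1/(1+δ) ≤ x t 0 := by
    by_contra hno
    push_neg at hno
    -- all e_y are nonnegative
    have hEYnn : ∀ t : ℕ, 0 ≤ EY t := by
      intro t
      match t with
      | 0 => rw [hEY0]
      | 1 => rw [hEYval 1 le_rfl, hp1]; linarith
      | (n+2) =>
        rw [hEYval (n+2) (by omega)]
        have h := hno (n+2) (by omega)
        have h2 := mul_lt_mul_of_pos_left h honeδ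
        nlinarith [h2, hinv]
    have hEynn : ∀ n : ℕ, 0 ≤ cumSum EY n := by
      intro n
      have h := add_le_cumSum EY 0 (Nat.zero_le n) (fun k _ _ => hEYnn k)
      rw [hcum0, hEY0] at h
      linarith [h]
    have hEymono : ∀ m n : ℕ, m ≤ n → cumSum EY m ≤ cumSum EY n := by
      intro m n hmn
      have h := add_le_cumSum EY 0 hmn (fun k _ _ => hEYnn k)
      nlinarith [h]
    have hqle : ∀ n : ℕ, y (n+1) 0 ≤ 1/2 := by
      intro n
      rw [hdy n]
      have h0 : (0:ℝ) ≤ η * (cumSum EY n + EY n) :=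
        mul_nonneg hη.le (by linarith [hEynn n, hEYnn n])
      have := hmono 0 _ h0
      rw [hstd1] at this
      linarith
    have hEXle2 : ∀ t : ℕ, EX t ≤ δ/2 := by
      intro t
      match t with
      | 0 => rw [hEX0]; linarith
      | (n+1) =>
        rw [hEXval (n+1) (by omega)]
        have := mul_le_mul_of_nonneg_left (hqle n) honeδ.le
        linarith
    by_cases hcase : ∃ s : ℕ, 1/(20*lam) ≤ cumSum EY s
    · obtain ⟨s, hs⟩ := hcase
      have hηlam : η * (1/(20*lam)) = 1/(20*L) := by
        rw [hlam]; field_simp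
      have hqs : ∀ n : ℕ, s ≤ n → y (n+1) 0 ≤ 1/2 - c1 := by
        intro n hn
        rw [hdy n]
        have h1 : 1/(20*lam) ≤ cumSum EY n + EY n := by
          have := hEymono s n hn
          linarith [hEYnn n]
        have h2 : 1/(20*L) ≤ η * (cumSum EY n + EY n) := by
          rw [← hηlam]
          exact mul_le_mul_of_nonneg_left h1 hη.le
        have h3 := hmono _ _ h2
        linarith [h3, hc1]
      have hEXdrop : ∀ t : ℕ, s+1 ≤ t → EX t ≤ -(c1/2) := by
        intro t ht
        obtain ⟨n, rfl⟩ : ∃ n, t = n+1 := ⟨t-1, by omega⟩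
        rw [hEXval (n+1) (by omega)]
        have hq := hqs n (by omega)
        have := mul_le_mul_of_nonneg_left hq honeδ.le
        nlinarith [mul_pos hδ hc1pos]
      obtain ⟨j, hj⟩ := exists_nat_ge ((cumSum EX s - M/η) * (2/c1))
      have hsum : cumSum EX (s+1+j) ≤ cumSum EX s + (((s+1+j:ℕ):ℝ) - (s:ℝ)) * (-(c1/2)) :=
        cumSum_le_add EX _ (by omega) (fun k hk _ => hEXdrop k (by omega))
      have haxle : cumSum EX (s+1+j) + EX (s+1+j) ≤ M/η := by
        have h1 := hEXdrop (s+1+j) (by omega)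
        have h2 : (((s+1+j:ℕ):ℝ) - (s:ℝ)) = (j:ℝ) + 1 := by push_cast; ring
        rw [h2] at hsum
        have h3 : cumSum EX s - M/η ≤ (j:ℝ) * (c1/2) := by
          have h4 := mul_le_mul_of_nonneg_right hj (le_of_lt (by positivity : (0:ℝ) < c1/2))
          have h5 : (cumSum EX s - M/η) * (2/c1) * (c1/2) = cumSum EX s - M/η := by
            field_simp
          rw [h5] at h4
          linarith
        nlinarith [h1, hsum, hc1pos]
      have hfin : 1/(1+δ) ≤ x (s+1+j+1) 0 := by
        rw [hdx (s+1+j)]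
        apply hM
        calc η * (cumSum EX (s+1+j) + EX (s+1+j)) ≤ η * (M/η) :=
              mul_le_mul_of_nonneg_left haxle hη.le
          _ = M := by field_simp
      exact absurd hfin (not_le.mpr (hno (s+1+j+1) (by omega)))
    · push_neg at hcase
      have hηlam : η * (1/(20*lam)) = 1/(20*L) := by
        rw [hlam]; field_simp
      -- lower bound on q
      have hqlb : ∀ n : ℕ, 1/2 - c1 - lam * EY n ≤ y (n+1) 0 := by
        intro n
        rw [hdy n]
        have h1 : cumSum EY n + EY n ≤ 1/(20*lam) + EY n := by
          linarith [le_of_lt (hcase n)]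
        have h2 : η * (cumSum EY n + EY n) ≤ 1/(20*L) + η * EY n := by
          have h2a := mul_le_mul_of_nonneg_left h1 hη.le
          have h2b : η * (1/(20*lam) + EY n) = 1/(20*L) + η * EY n := by
            rw [hlam]; field_simp
          linarith [h2a, h2b.ge, h2b.le]
        have h3 := hmono _ _ h2
        have h4 := hstd4 (1/(20*L) + η * EY n) (1/(20*L))
        have h5 : |1/(20*L) + η * EY n - 1/(20*L)| = η * EY n := by
          rw [add_sub_cancel_left]
          exact abs_of_nonneg (mul_nonneg hη.le (hEYnn n))
        rw [h5] at h4
        have h6 := (abs_le.mp h4).1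
        have h7 : L * (η * EY n) = lam * EY n := by rw [hlam]; ring
        rw [h7] at h6
        linarith [h3, h6, hc1]
      -- lower bound on cumulative x-losses
      have hExlb : ∀ m : ℕ, -(1+δ) * (c1*((m:ℝ)+1) + lam * cumSum EY m) ≤ cumSum EX (m+1) := by
        intro m
        induction m with
        | zero =>
          have hq := hqlb 0
          rw [hEY0] at hq
          have hEX1 : -(1+δ) * c1 ≤ EX 1 := by
            rw [hEXval 1 le_rfl]
            have h := mul_le_mul_of_nonneg_left hq honeδ.le
            nlinarith [h]
          have e1 : cumSum EX (0+1) = EX 0 + EX (0+1) := by rw [cumSum_succ, hcum0]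
          rw [e1, hEX0, hcum0, hEY0]
          norm_num
          nlinarith [hEX1]
        | succ m ih =>
          rw [cumSum_succ EX (m+1)]
          have hq := hqlb (m+1)
          have hEXm : -(1+δ) * (c1 + lam * EY (m+1)) ≤ EX (m+1+1) := by
            rw [hEXval (m+1+1) (by omega)]
            have := mul_le_mul_of_nonneg_left hq honeδ.le
            nlinarith [this]
          have hEYcs : cumSum EY (m+1) = cumSum EY m + EY (m+1) := cumSum_succ EY m
          rw [hEYcs]
          push_cast at ih ⊢
          linarith [ih, hEXm]
      have hExlb2 : ∀ m : ℕ, -(1+δ) * (c1*(m:ℝ) + 1/20) ≤ cumSum EX m := by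
        intro m
        match m with
        | 0 =>
          rw [hcum0, hEX0]
          push_cast
          nlinarith [hc1pos]
        | (m+1) =>
          have h1 := hExlb m
          have h2 : lam * cumSum EY m ≤ 1/20 := by
            have h3 := le_of_lt (hcase m)
            have h4 := mul_le_mul_of_nonneg_left h3 hlampos.le
            have h5 : lam * (1/(20*lam)) = 1/20 := by field_simp
            rw [h5] at h4
            exact h4
          push_cast at h1 ⊢
          nlinarith [h1, hc1pos]
      -- lower bound on e_y, expanded form
      have hEYlb : ∀ n : ℕ, (1-δ)/2 - (1+δ)^2*(c1*(lam*(n:ℝ)) + lam/20) - (1+δ)*lam/2 ≤ EY (n+1) := by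
        intro n
        have hA : -((1+δ) * (c1*(n:ℝ) + 1/20) + 1/2) ≤ cumSum EX n + EX n := by
          have h1 := hExlb2 n
          have h2 := hEXlb n
          linarith
        have hAnn : (0:ℝ) ≤ (1+δ) * (c1*(n:ℝ) + 1/20) + 1/2 := by
          have : (0:ℝ) ≤ c1*(n:ℝ) := mul_nonneg hc1pos.le (Nat.cast_nonneg n)
          nlinarith
        have hparg := mul_le_mul_of_nonneg_left hA hη.le
        have hp := hmono _ _ hparg
        have hb := hF1z (η * (-((1+δ) * (c1*(n:ℝ) + 1/20) + 1/2)))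
        have habs : η * (-((1+δ) * (c1*(n:ℝ) + 1/20) + 1/2)) =
            -(η * ((1+δ) * (c1*(n:ℝ) + 1/20) + 1/2)) := by ring
        rw [habs, abs_neg, abs_of_nonneg (mul_nonneg hη.le hAnn)] at hb
        rw [← habs] at hb
        have hxval : x (n+1) 0 ≤ 1/2 + lam * ((1+δ) * (c1*(n:ℝ) + 1/20) + 1/2) := by
          rw [hdx n]
          calc F1 (η * (cumSum EX n + EX n))
              ≤ F1 (η * (-((1+δ) * (c1*(n:ℝ) + 1/20) + 1/2))) := hp
            _ ≤ 1/2 + L * (η * ((1+δ) * (c1*(n:ℝ) + 1/20) + 1/2)) := hb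
            _ = 1/2 + lam * ((1+δ) * (c1*(n:ℝ) + 1/20) + 1/2) := by rw [hlam]; ring
        have hmul := mul_le_mul_of_nonneg_left hxval honeδ.le
        rw [hEYval (n+1) (by omega)]
        nlinarith [hmul]
      -- the contradiction: E_y grows beyond the bound
      set N := Nat.ceil (1/lam) with hN
      have hNlbR : (1/lam : ℝ) ≤ (N:ℝ) := Nat.le_ceil _
      have hN1 : 1 ≤ N := by
        by_contra hcon
        push_neg at hcon
        interval_cases N
        · simp only [Nat.cast_zero] at hNlbR
          have : (0:ℝ) < 1/lam := by positivity
          linarith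
      have hEY14 : ∀ k : ℕ, 1 ≤ k → k ≤ N → 1/4 ≤ EY k := by
        intro k hk1 hkN
        obtain ⟨n, rfl⟩ : ∃ n, k = n+1 := ⟨k-1, by omega⟩
        have h := hEYlb n
        have hnN : (n:ℝ) ≤ (N:ℝ) - 1 := by
          have h1 : ((n:ℝ)+1) ≤ (N:ℝ) := by exact_mod_cast hkN
          linarith
        have hNub : (N:ℝ) < 1/lam + 1 := Nat.ceil_lt_add_one (by positivity)
        have hlamn : lam * (n:ℝ) ≤ 1 := by
          have h1 : (n:ℝ) ≤ 1/lam := by linarith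
          have h2 := mul_le_mul_of_nonneg_left h1 hlampos.le
          have h3 : lam * (1/lam) = 1 := by field_simp
          linarith
        have e2 : (1+δ)^2 ≤ (16/15)^2 := by nlinarith
        have hlamnn : (0:ℝ) ≤ lam * (n:ℝ) := mul_nonneg hlampos.le (Nat.cast_nonneg n)
        have a1 : (1+δ)^2 * (c1*(lam*(n:ℝ))) ≤ (16/15)^2 * (1/20) := by
          have hcl : c1 * (lam*(n:ℝ)) ≤ (1/20) * 1 :=
            mul_le_mul hc1le hlamn hlamnn (by norm_num)
          have hcln : 0 ≤ c1 * (lam*(n:ℝ)) := mul_nonneg hc1pos.le hlamnn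
          exact mul_le_mul e2 (by linarith) hcln (by positivity)
        have a2 : (1+δ)^2 * (lam/20) ≤ (16/15)^2 * (1/80) := by
          exact mul_le_mul e2 (by linarith) (by positivity) (by positivity)
        have a3 : (1+δ)*lam ≤ (16/15)*(1/4) :=
          mul_le_mul (by linarith) hlam4 hlampos.le (by norm_num)
        have hdist : (1+δ)^2*(c1*(lam*(n:ℝ)) + lam/20) =
            (1+δ)^2*(c1*(lam*(n:ℝ))) + (1+δ)^2*(lam/20) := by ring
        rw [hdist] at h
        linarith
      have hfin : 1/(20*lam) ≤ cumSum EY N := by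
        have h := add_le_cumSum EY (1/4) (Nat.zero_le N) (fun k hk hk' => hEY14 k hk hk')
        rw [hcum0, hEY0] at h
        have h2 : (1/lam) * (1/4) ≤ ((N:ℝ) - 0) * (1/4) := by
          nlinarith [hNlbR]
        have h3 : 1/(20*lam) ≤ (1/lam) * (1/4) := by
          have hid : (1/lam) * (1/4) - 1/(20*lam) = (1/lam) * (1/5) := by
            field_simp; ring
          have hpr := mul_pos (one_div_pos.mpr hlampos) (by norm_num : (0:ℝ) < 1/5)
          linarith
        linarith
      exact absurd hfin (not_le.mpr (hcase N))
  -- Step 2: minimal such T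
  set T := Nat.find hex with hT
  obtain ⟨hT2, hTp⟩ := Nat.find_spec hex
  have hmin : ∀ t : ℕ, 2 ≤ t → 1/(1+δ) ≤ x t 0 → T ≤ t :=
    fun t h1 h2 => Nat.find_min' hex ⟨h1, h2⟩
  have hminlt : ∀ t : ℕ, 2 ≤ t → t < T → x t 0 < 1/(1+δ) := by
    intro t h1 h2
    have := Nat.find_min hex h2
    push_neg at this
    exact this h1
  -- Step 3: T ≥ 1/(2ηL)
  obtain ⟨n0, hTn0⟩ : ∃ n, T = n + 1 := ⟨T-1, by omega⟩
  have hTlb : 1 / (2 * η * L) ≤ (T:ℝ) := by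
    -- |argument| is at most T (1/2+δ)
    have hub := cumSum_le_add EX (1/2+δ) (Nat.zero_le n0) (fun k _ _ => hEXub k)
    have hlb := add_le_cumSum EX (-(1/2+δ)) (Nat.zero_le n0)
      (fun k _ _ => by have := hEXlb k; linarith)
    rw [hcum0, hEX0] at hub hlb
    have h1 := hEXub n0
    have h2 := hEXlb n0
    have habs : |cumSum EX n0 + EX n0| ≤ ((n0:ℝ)+1) * (1/2+δ) := by
      rw [abs_le]
      constructor
      · push_cast at hlb ⊢
        nlinarith [hlb, h2]
      · push_cast at hub ⊢
        nlinarith [hub, h1]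
    have hLip := hstd4 (η*(cumSum EX n0 + EX n0)) 0
    rw [hstd1, sub_zero] at hLip
    have habs2 : |η*(cumSum EX n0 + EX n0)| = η * |cumSum EX n0 + EX n0| := by
      rw [abs_mul, abs_of_pos hη]
    rw [habs2] at hLip
    have h3 : L * (η * |cumSum EX n0 + EX n0|) ≤ lam * (((n0:ℝ)+1) * (1/2+δ)) := by
      have := mul_le_mul_of_nonneg_left habs (mul_nonneg hη.le hL.le)
      rw [hlam]
      nlinarith [this]
    have h4 := (abs_le.mp hLip).2
    have hxT : 1/(1+δ) ≤ F1 (η * (cumSum EX n0 + EX n0)) := by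
      have h := hTp
      rw [← hT] at h
      rw [hTn0] at h
      rw [← hdx n0]
      exact h
    have h5 : 1/(1+δ) - 1/2 ≤ lam * (((n0:ℝ)+1) * (1/2+δ)) := by linarith
    have hTeq : (T:ℝ) = (n0:ℝ)+1 := by rw [hTn0]; push_cast; ring
    rw [div_le_iff₀ (by positivity : (0:ℝ) < 2*η*L)]
    have h2ηL : 2*η*L = 2*lam := by rw [hlam]; ring
    rw [h2ηL, hTeq]
    -- numeric: from h5, hinv, δ ≤ 1/15 conclude 1 ≤ (n0+1)·2·lam
    set v : ℝ := lam * ((n0:ℝ)+1) with hv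
    have hvnn : 0 ≤ v := mul_nonneg hlampos.le (by positivity)
    by_contra hcon
    push_neg at hcon
    -- hcon : (n0+1) * (2*lam) < 1, so v < 1/2
    have hvlt : v < 1/2 := by rw [hv]; nlinarith [hcon]
    have hu1 : 1/(1+δ) ≤ 1 := hone.le
    have hu2 : 1 - δ ≤ 1/(1+δ) := by nlinarith [hinv]
    nlinarith [h5, hvlt, hδ1, hδ]
  -- Step 4: y T 0 ≤ 1/2 - c1
  have hyT : y T 0 ≤ 1/2 - c1 := by
    -- e_y is nonnegative before time T
    have hEYnnT : ∀ k : ℕ, k ≤ n0 → 0 ≤ EY k := by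
      intro k hk
      match k, hk with
      | 0, _ => rw [hEY0]
      | 1, _ => rw [hEYval 1 le_rfl, hp1]; linarith
      | (j+2), hk =>
        rw [hEYval (j+2) (by omega)]
        have h := hminlt (j+2) (by omega) (by omega)
        have h2 := mul_lt_mul_of_pos_left h honeδ
        nlinarith [h2, hinv]
    -- the index m ~ 1/(2 lam)
    set m : ℕ := Nat.ceil (1/(2*lam)) - 1 with hm
    have h2lam : (2:ℝ) ≤ 1/(2*lam) := by
      rw [le_div_iff₀ (by positivity : (0:ℝ) < 2*lam)]
      linarith
    have hceil2 : 2 ≤ Nat.ceil (1/(2*lam)) := by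
      by_contra hcon
      push_neg at hcon
      have h1 := Nat.le_ceil (1/(2*lam))
      have h2 : ((Nat.ceil (1/(2*lam)) : ℕ) : ℝ) ≤ 1 := by
        have : Nat.ceil (1/(2*lam)) ≤ 1 := by omega
        exact_mod_cast this
      linarith
    have hm1 : m + 1 = Nat.ceil (1/(2*lam)) := by omega
    have hm1R : ((m:ℝ) + 1) = ((Nat.ceil (1/(2*lam)) : ℕ) : ℝ) := by
      exact_mod_cast congrArg (fun k : ℕ => (k:ℝ)) hm1
    have hmT : m + 1 ≤ T := by
      rw [hm1]
      apply Nat.ceil_le.mpr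
      have heq : 1/(2*lam) = 1/(2*η*L) := by rw [hlam]; ring
      rw [heq]
      exact hTlb
    have hmlam : lam * ((m:ℝ)+1) ≤ 1/2 + lam := by
      have h1 : ((Nat.ceil (1/(2*lam)) : ℕ) : ℝ) < 1/(2*lam) + 1 :=
        Nat.ceil_lt_add_one (by positivity)
      have h2 : lam * (1/(2*lam) + 1) = 1/2 + lam := by field_simp
      nlinarith [h1, hm1R, hlampos]
    have hmlam' : lam * (m:ℝ) ≤ 1/2 := by nlinarith [hmlam]
    -- e_y ≥ 1/5 up to m
    have hEY15 : ∀ k : ℕ, 1 ≤ k → k ≤ m → 1/5 ≤ EY k := by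
      intro k hk1 hkm
      obtain ⟨n, rfl⟩ : ∃ n, k = n+1 := ⟨k-1, by omega⟩
      have h := hEYunc n
      have hnm : ((n:ℝ)+1) ≤ (m:ℝ) := by exact_mod_cast hkm
      have h1 : lam * ((n:ℝ)+1) ≤ 1/2 := by nlinarith [hmlam', hlampos]
      have h2 : (1+δ) * (lam * ((n:ℝ)+1)) ≤ (16/15) * (1/2) :=
        mul_le_mul (by linarith) h1 (mul_nonneg hlampos.le (by positivity)) (by norm_num)
      nlinarith [h, h2]
    -- cumulative y-losses exceed the threshold at m, hence at n0 = T-1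
    have hEym : 1/(20*lam) ≤ cumSum EY m := by
      have h := add_le_cumSum EY (1/5) (Nat.zero_le m) (fun k hk hk' => hEY15 k hk hk')
      rw [hcum0, hEY0] at h
      have hmge : 1/(2*lam) - 1 ≤ (m:ℝ) := by
        have h1 := Nat.le_ceil (1/(2*lam))
        linarith [hm1R.ge, hm1R.le, h1]
      have hlm : 1/4 ≤ lam * (m:ℝ) := by
        have h2 : lam * (1/(2*lam) - 1) = 1/2 - lam := by field_simp
        nlinarith [hmge, hlampos]
      rw [div_le_iff₀ (by positivity : (0:ℝ) < 20*lam)]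
      have h3 : ((m:ℝ) - 0) * (1/5) * (20 * lam) = 4 * (lam * (m:ℝ)) := by ring
      nlinarith [h, hlm, hlampos]
    have hmn0 : m ≤ n0 := by omega
    have hEymono := add_le_cumSum EY 0 hmn0 (fun k hk hk' => hEYnnT k (by omega))
    have hay : 1/(20*L) ≤ η * (cumSum EY n0 + EY n0) := by
      have h1 : 1/(20*lam) ≤ cumSum EY n0 + EY n0 := by
        have h2 := hEYnnT n0 le_rfl
        nlinarith [hEymono, hEym, h2]
      have h3 : η * (1/(20*lam)) = 1/(20*L) := by rw [hlam]; field_simp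
      calc 1/(20*L) = η * (1/(20*lam)) := h3.symm
        _ ≤ η * (cumSum EY n0 + EY n0) := mul_le_mul_of_nonneg_left h1 hη.le
    have h4 := hmono _ _ hay
    rw [hTn0, hdy n0]
    linarith [h4, hc1]
  exact ⟨T, hT2, hTp, hmin, hTlb, hyT⟩

end
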